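/- If (x, z, ζ) is a fixed point of the ADMM iteration x ← (A+ρI)⁻¹(b+ρ(z−ζ)), z ← median(l, u, (μv+ρ(x+ζ))/(μ+ρ)), ζ ← ζ + x − z (with updates applied in order), then x = z and z is the unique minimizer of (1/2)xᵀAx − bᵀx + (μ/2)‖x − v‖² over the box [l,u]. -/

import Mathlib

/-!
Write `f` for the objective and `g = Az - b + μ(z - v)` for its gradient at `z`. The update
`ζ ← ζ + x - z` leaves `ζ` fixed only if `x = z`, and then the `x`-update reads `Az + ρζ = b`.
Hence the point `p` that the `z`-update clamps to the box satisfies `(μ + ρ)(z - p) = g`, and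
since clamping is the coordinatewise projection onto the box, `(p - z)(y - z) ≤ 0` for every `y`
in the box: `g ⬝ (y - z) ≥ 0` is the first-order optimality condition. As `A` is positive
semidefinite, expanding `f` around `z` then gives `f y ≥ f z + (μ/2)‖y - z‖²`, which is both
minimality and uniqueness.
-/
open Matrix

theorem sub_mul_sub_clamp_nonpos {l u p y : ℝ} (hly : l ≤ y) (hyu : y ≤ u) :
    (p - max l (min u p)) * (y - max l (min u p)) ≤ 0 := by
  rcases le_total p l with hpl | hlp
  · rw [min_eq_right (hpl.trans (hly.trans hyu)), max_eq_left hpl]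
    exact mul_nonpos_of_nonpos_of_nonneg (by linarith) (by linarith)
  rcases le_total u p with hup | hpu
  · rw [min_eq_left hup, max_eq_right (hly.trans hyu)]
    exact mul_nonpos_of_nonneg_of_nonpos (by linarith) (by linarith)
  · simp [min_eq_right hpu, max_eq_right hlp]

theorem mulVec_eq_of_eq_inv_mulVec {n α : Type*} [Fintype n] [DecidableEq n] [CommRing α]
    {M : Matrix n n α} (hM : IsUnit M) {x c : n → α} (h : x = M⁻¹ *ᵥ c) : M *ᵥ x = c := by
  rw [h, mulVec_mulVec, mul_nonsing_inv M ((isUnit_iff_isUnit_det M).mp hM), one_mulVec]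

namespace BoxQP

variable {n : Type*} [Fintype n] (A : Matrix n n ℝ) (b v : EuclideanSpace ℝ n) (μ : ℝ)

noncomputable def objective (y : EuclideanSpace ℝ n) : ℝ :=
  (1/2) * (y ⬝ᵥ A *ᵥ y) - b ⬝ᵥ y + (μ/2) * ‖y - v‖^2

def gradient (z : EuclideanSpace ℝ n) : n → ℝ :=
  A *ᵥ z - b + μ • (z - v)

variable {A}

theorem objective_eq_add (hA : A.IsHermitian) (y z : EuclideanSpace ℝ n) :
    objective A b v μ y = objective A b v μ z + gradient A b v μ z ⬝ᵥ (y - z)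
      + (1/2) * ((y - z : n → ℝ) ⬝ᵥ A *ᵥ (y - z)) + (μ/2) * ‖y - z‖^2 := by
  have hnorm : ‖y - v‖^2 = ‖y - z‖^2 + 2 * ((z - v : n → ℝ) ⬝ᵥ (y - z)) + ‖z - v‖^2 := by
    rw [← sub_add_sub_cancel y z v, norm_add_sq_real, EuclideanSpace.inner_eq_star_dotProduct,
      star_trivial, WithLp.ofLp_sub, WithLp.ofLp_sub, dotProduct_comm]
  have hsymm : (z : n → ℝ) ⬝ᵥ A *ᵥ (y - z) = A *ᵥ z ⬝ᵥ (y - z) := by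
    rw [dotProduct_mulVec, ← vecMul_transpose, ← conjTranspose_eq_transpose_of_trivial, hA.eq]
  unfold objective gradient
  rw [hnorm]
  generalize hd : (y : n → ℝ) - z = d at hsymm ⊢
  rw [← add_sub_cancel (z : n → ℝ) y, hd]
  simp only [mulVec_add, dotProduct_add, add_dotProduct, sub_dotProduct, smul_dotProduct,
    smul_eq_mul, hsymm, dotProduct_comm d]
  ring

theorem objective_add_le (hA : A.PosSemidef) {y z : EuclideanSpace ℝ n}
    (hvi : 0 ≤ gradient A b v μ z ⬝ᵥ (y - z)) :
    objective A b v μ z + (μ/2) * ‖y - z‖^2 ≤ objective A b v μ y := by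
  have hquad : 0 ≤ (y - z : n → ℝ) ⬝ᵥ A *ᵥ (y - z) := by
    simpa using hA.dotProduct_mulVec_nonneg (y - z : n → ℝ)
  rw [objective_eq_add b v μ hA.isHermitian y z]
  linarith

theorem objective_le (hμ : 0 ≤ μ) (hA : A.PosSemidef) {y z : EuclideanSpace ℝ n}
    (hvi : 0 ≤ gradient A b v μ z ⬝ᵥ (y - z)) :
    objective A b v μ z ≤ objective A b v μ y :=
  le_of_add_le_of_nonneg_left (objective_add_le b v μ hA hvi) (by positivity)

theorem eq_of_objective_le (hμ : 0 < μ) (hA : A.PosSemidef) {y z : EuclideanSpace ℝ n}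
    (hvi : 0 ≤ gradient A b v μ z ⬝ᵥ (y - z)) (hy : objective A b v μ y ≤ objective A b v μ z) :
    y = z := by
  have hle := objective_add_le b v μ hA hvi
  have : ‖y - z‖^2 ≤ 0 := by nlinarith
  simpa [sub_eq_zero] using this

theorem gradient_apply_of_mulVec_eq [DecidableEq n] {ρ : ℝ} (hμρ : μ + ρ ≠ 0)
    {z ζ : EuclideanSpace ℝ n} (h : (A + ρ • 1) *ᵥ z = (b + ρ • (z - ζ) : n → ℝ)) (i : n) :
    gradient A b v μ z i = (μ + ρ) * (z i - (μ * v i + ρ * (z i + ζ i)) / (μ + ρ)) := by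
  have hi := congrFun h i
  simp only [add_mulVec, smul_mulVec, one_mulVec, Pi.add_apply, Pi.smul_apply, Pi.sub_apply,
    smul_eq_mul] at hi
  simp only [gradient, Pi.add_apply, Pi.smul_apply, Pi.sub_apply, smul_eq_mul]
  field_simp
  linarith

theorem gradient_dotProduct_nonneg_of_fixedPoint [DecidableEq n] {ρ : ℝ} (hμρ : 0 < μ + ρ)
    {l u z ζ : EuclideanSpace ℝ n} (h : (A + ρ • 1) *ᵥ z = (b + ρ • (z - ζ) : n → ℝ))
    (hz : ∀ i, z i = max (l i) (min (u i) ((μ * v i + ρ * (z i + ζ i)) / (μ + ρ))))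
    {y : EuclideanSpace ℝ n} (hy : ∀ i, l i ≤ y i ∧ y i ≤ u i) :
    0 ≤ gradient A b v μ z ⬝ᵥ (y - z) := by
  refine Finset.sum_nonneg fun i _ => ?_
  set p := (μ * v i + ρ * (z i + ζ i)) / (μ + ρ)
  have hproj : (p - z i) * (y i - z i) ≤ 0 := hz i ▸ sub_mul_sub_clamp_nonpos (hy i).1 (hy i).2
  rw [Pi.sub_apply, gradient_apply_of_mulVec_eq b v μ hμρ.ne' h]
  nlinarith

end BoxQP

open BoxQP in
theorem stmt_6_general (D : ℕ) (A : Matrix (Fin D) (Fin D) ℝ) (b v l u : EuclideanSpace ℝ (Fin D))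
    (μ ρ : ℝ) (hApsd : A.PosSemidef) (hμ : 0 < μ) (hρ : 0 < ρ)
    (hlu : ∀ i, l i ≤ u i)
    (x z ζ : EuclideanSpace ℝ (Fin D))
    (hx : x = (A + ρ • (1 : Matrix (Fin D) (Fin D) ℝ))⁻¹.mulVec (b + ρ • (z - ζ)))
    (hz : ∀ i, z i = max (l i) (min (u i) ((μ * v i + ρ * (x i + ζ i)) / (μ + ρ))))
    (hζ : ζ = ζ + x - z) :
    x = z ∧
    (∀ i, l i ≤ z i ∧ z i ≤ u i) ∧
    (∀ y : EuclideanSpace ℝ (Fin D), (∀ i, l i ≤ y i ∧ y i ≤ u i) →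
      (1/2) * (z ⬝ᵥ A.mulVec z) - b ⬝ᵥ z + (μ/2) * ‖z - v‖^2 ≤
      (1/2) * (y ⬝ᵥ A.mulVec y) - b ⬝ᵥ y + (μ/2) * ‖y - v‖^2) ∧
    (∀ w : EuclideanSpace ℝ (Fin D), (∀ i, l i ≤ w i ∧ w i ≤ u i) →
      (∀ y : EuclideanSpace ℝ (Fin D), (∀ i, l i ≤ y i ∧ y i ≤ u i) →
        (1/2) * (w ⬝ᵥ A.mulVec w) - b ⬝ᵥ w + (μ/2) * ‖w - v‖^2 ≤
        (1/2) * (y ⬝ᵥ A.mulVec y) - b ⬝ᵥ y + (μ/2) * ‖y - v‖^2) → w = z) := by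
  have hxz : x = z := by
    rwa [add_sub_assoc, left_eq_add, sub_eq_zero] at hζ
  rw [hxz] at hx hz
  have hM : (A + ρ • 1).PosDef := PosDef.posSemidef_add hApsd (PosDef.one.smul hρ)
  have hvi : ∀ y : EuclideanSpace ℝ (Fin D), (∀ i, l i ≤ y i ∧ y i ≤ u i) →
      0 ≤ gradient A b v μ z ⬝ᵥ (y - z) := fun y hy =>
    gradient_dotProduct_nonneg_of_fixedPoint b v μ (by linarith)
      (mulVec_eq_of_eq_inv_mulVec hM.isUnit hx) hz hy
  have hbox : ∀ i, l i ≤ z i ∧ z i ≤ u i := fun i =>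
    hz i ▸ ⟨le_max_left _ _, max_le (hlu i) (min_le_left _ _)⟩
  exact ⟨hxz, hbox, fun y hy => objective_le b v μ hμ.le hApsd (hvi y hy),
    fun w hw hmin => eq_of_objective_le b v μ hμ hApsd (hvi w hw) (hmin z hbox)⟩

/-- If (x, z, ζ) is a fixed point of the ADMM iteration
x ← (A+ρI)⁻¹(b+ρ(z−ζ)), z ← median(l, u, (μv+ρ(x+ζ))/(μ+ρ)), ζ ← ζ + x − z,
then x = z and z is the unique minimizer of (1/2)xᵀAx − bᵀx + (μ/2)‖x − v‖² over [l,u]. -/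
theorem stmt_6 (D : ℕ) (A : Matrix (Fin D) (Fin D) ℝ) (b v l u : EuclideanSpace ℝ (Fin D))
    (μ ρ : ℝ) (hA : A.IsSymm) (hApsd : A.PosSemidef) (hμ : 0 < μ) (hρ : 0 < ρ)
    (hlu : ∀ i, l i ≤ u i)
    (x z ζ : EuclideanSpace ℝ (Fin D))
    (hx : x = (A + ρ • (1 : Matrix (Fin D) (Fin D) ℝ))⁻¹.mulVec (b + ρ • (z - ζ)))
    (hz : ∀ i, z i = max (l i) (min (u i) ((μ * v i + ρ * (x i + ζ i)) / (μ + ρ))))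
    (hζ : ζ = ζ + x - z) :
    x = z ∧
    (∀ i, l i ≤ z i ∧ z i ≤ u i) ∧
    (∀ y : EuclideanSpace ℝ (Fin D), (∀ i, l i ≤ y i ∧ y i ≤ u i) →
      (1/2) * (z ⬝ᵥ A.mulVec z) - b ⬝ᵥ z + (μ/2) * ‖z - v‖^2 ≤
      (1/2) * (y ⬝ᵥ A.mulVec y) - b ⬝ᵥ y + (μ/2) * ‖y - v‖^2) ∧
    (∀ w : EuclideanSpace ℝ (Fin D), (∀ i, l i ≤ w i ∧ w i ≤ u i) →
      (∀ y : EuclideanSpace ℝ (Fin D), (∀ i, l i ≤ y i ∧ y i ≤ u i) →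
        (1/2) * (w ⬝ᵥ A.mulVec w) - b ⬝ᵥ w + (μ/2) * ‖w - v‖^2 ≤
        (1/2) * (y ⬝ᵥ A.mulVec y) - b ⬝ᵥ y + (μ/2) * ‖y - v‖^2) → w = z) :=
  stmt_6_general D A b v l u μ ρ hApsd hμ hρ hlu x z ζ hx hz hζ
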